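/- arXiv:1508.04084 — 3 statements merged into one kernel-verified Lean document; each statement's English description precedes it below -/
import Mathlib

section
/- For every positive integer m and nonnegative integer n, ∫_0^1 x^n E_{m-1}(x) dx = ((-1)^m / m) ( ∑_{j=0}^n C(n,j) E_{m+j}(0) / C(m+j, j) + E_{m+n}(0) / C(m+n, n) ). -/
/-- The `n`-th Euler polynomial `E_n(x)`, characterized by the generating function
`2 e^{xz}/(e^z+1) = ∑ E_n(x) z^n/n!`; given by the standard closed form
`E_n(x) = (2^{n+1}/(n+1)) (B_{n+1}((x+1)/2) - B_{n+1}(x/2))` in terms of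
Bernoulli polynomials. -/
noncomputable def eulerPoly (n : ℕ) (x : ℝ) : ℝ :=
  2 ^ (n + 1) / (n + 1) *
    (((Polynomial.bernoulli (n + 1)).map (algebraMap ℚ ℝ)).eval ((x + 1) / 2) -
     ((Polynomial.bernoulli (n + 1)).map (algebraMap ℚ ℝ)).eval (x / 2))

/-! Integration by parts with `E_{m+1}' = (m + 1) E_m` trades a power of `x` for a higher
Euler index, so the moments `∫₀¹ xⁿ E_m` obey a recursion in `n` whose boundary term is
`E_{m+1}(1) = (-1)^(m+1) E_{m+1}(0)` (reflection `E_k(1 - x) = (-1)^k E_k(x)`). The right-hand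
side obeys the same recursion because
`C(n+1, j+1) / C(m+1+j, j+1) = (n+1)/(m+1) · C(n, j) / C(m+1+j, j)`, and for `n = 0` both sides
reduce to `-2 E_{m+1}(0) / (m+1)` since `E_k(1) + E_k(0) = 2·0^k`. -/

open Polynomial Finset

section Bernoulli

variable {A : Type*} [CommRing A] [Algebra ℚ A]

theorem aeval_bernoulli_one_sub (n : ℕ) (x : A) :
    aeval (1 - x) (bernoulli n) = (-1) ^ n * aeval x (bernoulli n) := by
  simpa [aeval_comp] using congrArg (aeval x) (bernoulli_comp_one_sub_X n)

theorem aeval_bernoulli_one_add (n : ℕ) (x : A) :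
    aeval (1 + x) (bernoulli n) = aeval x (bernoulli n) + n * x ^ (n - 1) := by
  simpa [aeval_comp] using congrArg (aeval x) (bernoulli_comp_one_add_X n)

theorem hasDerivAt_aeval_bernoulli {𝕜 : Type*} [NontriviallyNormedField 𝕜] [Algebra ℚ 𝕜]
    (n : ℕ) (x : 𝕜) :
    HasDerivAt (fun y ↦ aeval y (bernoulli (n + 1))) ((n + 1) * aeval x (bernoulli n)) x := by
  simpa [derivative_bernoulli_add_one] using Polynomial.hasDerivAt_aeval (bernoulli (n + 1)) x

end Bernoulli

section EulerPoly

theorem eulerPoly_eq_aeval (n : ℕ) (x : ℝ) :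
    eulerPoly n x = 2 ^ (n + 1) / (n + 1) *
      (aeval ((x + 1) / 2) (bernoulli (n + 1)) - aeval (x / 2) (bernoulli (n + 1))) := by
  simp only [eulerPoly, eval_map_algebraMap]

theorem eulerPoly_one_sub (n : ℕ) (x : ℝ) :
    eulerPoly n (1 - x) = (-1) ^ n * eulerPoly n x := by
  have h₁ := aeval_bernoulli_one_sub (n + 1) (x / 2)
  have h₂ := aeval_bernoulli_one_sub (n + 1) ((x + 1) / 2)
  rw [show 1 - (x + 1) / 2 = (1 - x) / 2 by ring] at h₂
  rw [eulerPoly_eq_aeval, eulerPoly_eq_aeval, show (1 - x + 1) / 2 = 1 - x / 2 by ring, h₁, h₂]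
  ring

theorem eulerPoly_add_one_add_eulerPoly (n : ℕ) (x : ℝ) :
    eulerPoly n (x + 1) + eulerPoly n x = 2 * x ^ n := by
  have h := aeval_bernoulli_one_add (n + 1) (x / 2)
  rw [Nat.add_sub_cancel, Nat.cast_add_one, div_pow] at h
  rw [eulerPoly_eq_aeval, eulerPoly_eq_aeval, show (x + 1 + 1) / 2 = 1 + x / 2 by ring, h]
  field_simp
  ring

theorem eulerPoly_one (n : ℕ) : eulerPoly n 1 = (-1) ^ n * eulerPoly n 0 := by
  simpa using eulerPoly_one_sub n 0

theorem eulerPoly_zero_eq_neg_eulerPoly_one {n : ℕ} (hn : n ≠ 0) :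
    eulerPoly n 0 = -eulerPoly n 1 := by
  have h := eulerPoly_add_one_add_eulerPoly n 0
  rw [zero_add, zero_pow hn] at h
  linarith

theorem continuous_eulerPoly (n : ℕ) : Continuous (eulerPoly n) := by
  unfold eulerPoly
  fun_prop

theorem hasDerivAt_eulerPoly (n : ℕ) (x : ℝ) :
    HasDerivAt (eulerPoly (n + 1)) ((n + 1) * eulerPoly n x) x := by
  have h₁ := (hasDerivAt_aeval_bernoulli (n + 1) ((x + 1) / 2)).comp x
    (((hasDerivAt_id x).add_const 1).div_const 2)
  have h₂ := (hasDerivAt_aeval_bernoulli (n + 1) (x / 2)).comp x ((hasDerivAt_id x).div_const 2)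
  have hE : eulerPoly (n + 1) = fun y ↦ 2 ^ (n + 1 + 1) / (n + 1 + 1 : ℝ) *
      (aeval ((y + 1) / 2) (bernoulli (n + 1 + 1)) - aeval (y / 2) (bernoulli (n + 1 + 1))) := by
    ext y
    rw [eulerPoly_eq_aeval]
    push_cast
    rfl
  rw [hE]
  refine ((h₁.sub h₂).const_mul _).congr_deriv ?_
  rw [eulerPoly_eq_aeval]
  push_cast
  field_simp
  ring

end EulerPoly

section Moments

theorem integral_eulerPoly (m : ℕ) :
    ∫ x in (0 : ℝ)..1, eulerPoly m x = (eulerPoly (m + 1) 1 - eulerPoly (m + 1) 0) / (m + 1) := by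
  rw [sub_div]
  refine intervalIntegral.integral_eq_sub_of_hasDerivAt
    (f := fun y ↦ eulerPoly (m + 1) y / (m + 1)) (fun x _ ↦ ?_)
    ((continuous_eulerPoly m).intervalIntegrable 0 1)
  exact ((hasDerivAt_eulerPoly m x).div_const (m + 1)).congr_deriv (by field_simp)

theorem integral_pow_succ_mul_eulerPoly (n m : ℕ) :
    ∫ x in (0 : ℝ)..1, x ^ (n + 1) * eulerPoly m x =
      eulerPoly (m + 1) 1 / (m + 1) -
        (n + 1) / (m + 1) * ∫ x in (0 : ℝ)..1, x ^ n * eulerPoly (m + 1) x := by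
  have hv (x : ℝ) : HasDerivAt (fun y ↦ eulerPoly (m + 1) y / (m + 1)) (eulerPoly m x) x :=
    ((hasDerivAt_eulerPoly m x).div_const (m + 1)).congr_deriv (by field_simp)
  have hu (x : ℝ) : HasDerivAt (fun y ↦ y ^ (n + 1)) ((n + 1) * x ^ n) x := by
    simpa using hasDerivAt_pow (n + 1) x
  rw [intervalIntegral.integral_mul_deriv_eq_deriv_mul (fun x _ ↦ hu x) (fun x _ ↦ hv x)
    (((continuous_pow n).const_mul _).intervalIntegrable 0 1)
    ((continuous_eulerPoly m).intervalIntegrable 0 1),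
    ← intervalIntegral.integral_const_mul]
  simp only [one_pow, one_mul, ne_eq, Nat.succ_ne_zero, not_false_eq_true, zero_pow, zero_mul,
    sub_zero]
  congr 1
  exact intervalIntegral.integral_congr fun x _ ↦ by ring

end Moments

section BinomRatioSum

variable {K : Type*} [Field K]

def binomRatioSum (c : ℕ → K) (n m : ℕ) : K :=
  ∑ j ∈ range (n + 1), (n.choose j : K) * c (m + j) / (m + j).choose j +
    c (m + n) / (m + n).choose n

theorem choose_succ_div_choose_succ [CharZero K] (n m j : ℕ) :
    ((n + 1).choose (j + 1) : K) / (m + 1 + j).choose (j + 1) =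
      (n + 1) / (m + 1) * ((n.choose j : K) / (m + 1 + j).choose j) := by
  have h₁ : ((n + 1).choose (j + 1) : K) * (j + 1) = (n + 1) * n.choose j := by
    exact_mod_cast (Nat.add_one_mul_choose_eq n j).symm
  have h₂ : ((m + 1 + j).choose (j + 1) : K) * (j + 1) = (m + 1 + j).choose j * (m + 1) := by
    have := Nat.choose_succ_right_eq (m + 1 + j) j
    rw [show m + 1 + j - j = m + 1 by omega] at this
    exact_mod_cast this
  have hj : (j + 1 : K) ≠ 0 := Nat.cast_add_one_ne_zero j
  have hc : ((m + 1 + j).choose j : K) ≠ 0 := by exact_mod_cast (Nat.choose_pos (by omega)).ne'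
  rw [div_eq_iff (by exact_mod_cast (Nat.choose_pos (by omega)).ne'), ← mul_left_inj' hj,
    h₁, mul_assoc, h₂]
  field_simp

theorem binomRatioSum_zero (c : ℕ → K) (m : ℕ) : binomRatioSum c 0 m = 2 * c m := by
  simp only [binomRatioSum, zero_add, range_one, sum_singleton, Nat.choose_self, Nat.cast_one,
    add_zero, one_mul, Nat.choose_zero_right, div_one]
  ring

theorem binomRatioSum_succ [CharZero K] (c : ℕ → K) (n m : ℕ) :
    binomRatioSum c (n + 1) m = c m + (n + 1) / (m + 1) * binomRatioSum c n (m + 1) := by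
  have hterm (j : ℕ) :
      ((n + 1).choose (j + 1) : K) * c (m + (j + 1)) / (m + (j + 1)).choose (j + 1) =
        (n + 1) / (m + 1) * ((n.choose j : K) * c (m + 1 + j) / (m + 1 + j).choose j) := by
    rw [show m + (j + 1) = m + 1 + j by omega, mul_div_right_comm, choose_succ_div_choose_succ]
    ring
  have htail := hterm n
  simp only [Nat.choose_self, Nat.cast_one, one_mul] at htail
  rw [binomRatioSum, binomRatioSum, sum_range_succ', htail]
  simp only [hterm, Nat.choose_zero_right, Nat.cast_one, add_zero, one_mul, div_one]
  rw [mul_add, mul_sum]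
  ring

end BinomRatioSum

theorem integral_pow_mul_eulerPoly_eq_binomRatioSum (n m : ℕ) :
    ∫ x in (0 : ℝ)..1, x ^ n * eulerPoly m x =
      (-1) ^ (m + 1) / (m + 1) * binomRatioSum (fun k ↦ eulerPoly k 0) n (m + 1) := by
  induction n generalizing m with
  | zero =>
    have h₀ := eulerPoly_zero_eq_neg_eulerPoly_one m.succ_ne_zero
    have h₁ := eulerPoly_one (m + 1)
    simp only [pow_zero, one_mul]
    rw [integral_eulerPoly, binomRatioSum_zero]
    field_simp
    linear_combination 2 * h₁ - h₀
  | succ n ih =>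
    rw [integral_pow_succ_mul_eulerPoly, ih, binomRatioSum_succ, eulerPoly_one]
    push_cast
    field_simp
    ring

theorem integral_pow_mul_eulerPoly (m : ℕ) (hm : 0 < m) (n : ℕ) :
    ∫ x in (0:ℝ)..1, x ^ n * eulerPoly (m - 1) x =
      ((-1 : ℝ) ^ m / m) *
        ((∑ j ∈ Finset.range (n + 1),
            (n.choose j : ℝ) * eulerPoly (m + j) 0 / ((m + j).choose j : ℝ)) +
          eulerPoly (m + n) 0 / ((m + n).choose n : ℝ)) := by
  obtain ⟨k, rfl⟩ := Nat.exists_eq_add_one_of_ne_zero hm.ne'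
  rw [Nat.add_sub_cancel, integral_pow_mul_eulerPoly_eq_binomRatioSum, binomRatioSum]
  push_cast
  rfl
end

section
/- For every nonnegative integer n, ∑_{j=0}^n C(n,j) E_{j+2}(0)/((j+1)(j+2)) = -(2 E_{n+2}(0) - n)/(2(n+1)(n+2)). -/
open Polynomial Finset

namespace Polynomial

theorem hasseDeriv_map {R S : Type*} [Semiring R] [Semiring S] (f : R →+* S) (k : ℕ)
    (p : R[X]) :
    hasseDeriv k (p.map f) = (hasseDeriv k p).map f := by
  ext n
  simp [hasseDeriv_coeff, coeff_map]

theorem iterate_derivative_bernoulli (n k : ℕ) :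
    derivative^[k] (bernoulli n) = (n.descFactorial k : ℚ[X]) * bernoulli (n - k) := by
  induction k with
  | zero => simp
  | succ k ih =>
    rw [Function.iterate_succ_apply', ih, derivative_natCast_mul, derivative_bernoulli,
      Nat.descFactorial_succ, Nat.sub_sub]
    push_cast
    ring

theorem hasseDeriv_bernoulli (n k : ℕ) :
    hasseDeriv k (bernoulli n) = (n.choose k : ℚ[X]) * bernoulli (n - k) := by
  apply nsmul_right_injective (Nat.factorial_ne_zero k)
  dsimp only
  rw [← LinearMap.smul_apply, factorial_smul_hasseDeriv, iterate_derivative_bernoulli,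
    Nat.descFactorial_eq_factorial_mul_choose, nsmul_eq_mul]
  push_cast
  ring

variable {A : Type*} [CommRing A] [Algebra ℚ A]

theorem bernoulli_aeval_add (n : ℕ) (x y : A) :
    aeval (x + y) (bernoulli n) =
      ∑ k ∈ range (n + 1), n.choose k * aeval x (bernoulli k) * y ^ (n - k) := by
  -- Taylor expansion of `B_n` at `x`, with the Hasse derivatives `C(n,i) B_{n-i}` as coefficients.
  set P := (bernoulli n).map (algebraMap ℚ A)
  have hcoeff (i : ℕ) : (taylor x P).coeff i = n.choose i * aeval x (bernoulli (n - i)) := by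
    rw [taylor_coeff, hasseDeriv_map, hasseDeriv_bernoulli, Polynomial.map_mul, eval_mul,
      eval_map_algebraMap]
    simp
  have hdeg : (taylor x P).natDegree < n + 1 :=
    Nat.lt_succ_of_le <| natDegree_le_iff_coeff_eq_zero.2 fun N hN ↦ by
      rw [hcoeff, Nat.choose_eq_zero_of_lt hN, Nat.cast_zero, zero_mul]
  rw [← eval_map_algebraMap, add_comm, ← taylor_eval, eval_eq_sum_range' hdeg,
    ← sum_range_reflect]
  refine sum_congr rfl fun k hk ↦ ?_
  have hk : k ≤ n := Nat.lt_succ_iff.1 (mem_range.1 hk)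
  rw [hcoeff, add_tsub_cancel_right, Nat.sub_sub_self hk, Nat.choose_symm hk]

theorem bernoulli_aeval_one_add (n : ℕ) (x : A) :
    aeval (1 + x) (bernoulli n) = aeval x (bernoulli n) + n * x ^ (n - 1) := by
  simpa [aeval_comp] using congr(aeval x $(bernoulli_comp_one_add_X n))

theorem sum_choose_two_pow_mul_bernoulli_aeval {K : Type*} [Field K] [CharZero K] (n : ℕ)
    (z : K) :
    ∑ k ∈ range (n + 1), n.choose k * (2 ^ k * aeval z (bernoulli k)) =
      2 ^ n * aeval (z + 1 / 2) (bernoulli n) := by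
  rw [bernoulli_aeval_add, mul_sum]
  refine sum_congr rfl fun k hk ↦ ?_
  have hk : k ≤ n := Nat.lt_succ_iff.1 (mem_range.1 hk)
  rw [← Nat.add_sub_cancel' hk, pow_add, Nat.add_sub_cancel_left, div_pow, one_pow]
  field_simp

end Polynomial

theorem Nat.cast_choose_div_add_one {K : Type*} [Field K] [CharZero K] (n k : ℕ) :
    (n.choose k : K) / (k + 1) = (n + 1).choose (k + 1) / (n + 1) := by
  rw [div_eq_div_iff (Nat.cast_add_one_ne_zero k) (Nat.cast_add_one_ne_zero n), mul_comm]
  exact_mod_cast Nat.add_one_mul_choose_eq n k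

theorem eulerPoly_add_one (m : ℕ) (x : ℝ) :
    eulerPoly m (x + 1) = ∑ k ∈ range (m + 1), m.choose k * eulerPoly k x := by
  set g : ℕ → ℝ → ℝ := fun l y ↦
    2 ^ l * (aeval ((y + 1) / 2) (bernoulli l) - aeval (y / 2) (bernoulli l))
  have hE (k : ℕ) (y : ℝ) : eulerPoly k y = g (k + 1) y / (k + 1) := by
    rw [eulerPoly_eq_aeval]; ring
  have hsum : ∑ l ∈ range (m + 2), (m + 1).choose l * g l x = g (m + 1) (x + 1) := by
    simp only [g, mul_sub, sum_sub_distrib, sum_choose_two_pow_mul_bernoulli_aeval]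
    congr 4 <;> ring
  have hg0 : g 0 x = 0 := by simp only [g, Polynomial.bernoulli_zero, map_one, sub_self, mul_zero]
  rw [sum_range_succ', hg0, mul_zero, add_zero] at hsum
  rw [hE, ← hsum, sum_div]
  refine sum_congr rfl fun k _ ↦ ?_
  rw [hE, mul_div_right_comm, ← Nat.cast_choose_div_add_one]
  ring

theorem eulerPoly_add_one_add (m : ℕ) (x : ℝ) :
    eulerPoly m (x + 1) + eulerPoly m x = 2 * x ^ m := by
  rw [eulerPoly_eq_aeval, eulerPoly_eq_aeval, ← mul_add, sub_add_sub_cancel,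
    show (x + 1 + 1) / 2 = 1 + x / 2 by ring, bernoulli_aeval_one_add, Nat.add_sub_cancel, div_pow]
  push_cast
  field_simp
  ring

theorem eulerPoly_zero (x : ℝ) : eulerPoly 0 x = 1 := by
  have h₁ := eulerPoly_add_one 0 x
  have h₂ := eulerPoly_add_one_add 0 x
  simp only [zero_add, range_one, sum_singleton, Nat.choose_self, Nat.cast_one, one_mul] at h₁
  simp only [pow_zero, mul_one] at h₂
  linarith

theorem eulerPoly_one_s11 (x : ℝ) : eulerPoly 1 x = x - 1 / 2 := by
  have h₁ := eulerPoly_add_one 1 x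
  have h₂ := eulerPoly_add_one_add 1 x
  simp only [sum_range_succ, range_one, sum_singleton, Nat.choose_self, Nat.choose_zero_right,
    Nat.cast_one, one_mul, eulerPoly_zero] at h₁
  linarith

theorem sum_choose_eulerPoly_zero {m : ℕ} (hm : m ≠ 0) :
    ∑ k ∈ range (m + 1), (m.choose k : ℝ) * eulerPoly k 0 = -eulerPoly m 0 := by
  have h := eulerPoly_add_one_add m 0
  rw [eulerPoly_add_one, zero_pow hm, mul_zero] at h
  linarith

theorem sum_choose_eulerPoly_zero' (n : ℕ) :
    ∑ j ∈ Finset.range (n + 1),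
        (n.choose j : ℝ) * eulerPoly (j + 2) 0 / ((j + 1) * (j + 2)) =
      -(2 * eulerPoly (n + 2) 0 - n) / (2 * (n + 1) * (n + 2)) := by
  have hsum := sum_choose_eulerPoly_zero (m := n + 2) (by omega)
  rw [sum_range_succ', sum_range_succ', eulerPoly_zero, eulerPoly_one_s11] at hsum
  simp only [add_assoc, Nat.reduceAdd, Nat.choose_one_right, Nat.choose_zero_right] at hsum
  have hterm (j : ℕ) :
      (n.choose j : ℝ) / ((j + 1) * (j + 2)) = (n + 2).choose (j + 2) / ((n + 1) * (n + 2)) := by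
    rw [div_eq_div_iff (by positivity) (by positivity)]
    have h₁ : ((n : ℝ) + 1) * n.choose j = (n + 1).choose (j + 1) * (j + 1) := by
      exact_mod_cast Nat.add_one_mul_choose_eq n j
    have h₂ : ((n : ℝ) + 2) * (n + 1).choose (j + 1) = (n + 2).choose (j + 2) * (j + 2) := by
      exact_mod_cast Nat.add_one_mul_choose_eq (n + 1) (j + 1)
    linear_combination ((n : ℝ) + 2) * h₁ + ((j : ℝ) + 1) * h₂
  calc _ = (∑ j ∈ range (n + 1), ((n + 2).choose (j + 2) : ℝ) * eulerPoly (j + 2) 0) /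
        ((n + 1) * (n + 2)) := by
        rw [sum_div]
        refine sum_congr rfl fun j _ ↦ ?_
        rw [mul_div_right_comm, hterm, div_mul_eq_mul_div]
    _ = _ := by
      field_simp
      push_cast at hsum
      linarith
end

section
/- For integers p, q with q ≥ 1 and 1 ≤ p ≤ q, and for every positive integer m, the Euler polynomial at the rational argument p/q satisfies E_m(p/q) = (4·m!/(2qπ)^{m+1}) ∑_{r=1}^{q} sin((2r-1)πp/q - mπ/2) ζ(m+1, (2r-1)/(2q)), where ζ(s,a) = ∑_{n=0}^∞ 1/(n+a)^s is the Hurwitz zeta function. -/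
/-- The Hurwitz zeta function `ζ(s,a) = ∑_{n=0}^∞ 1/(n+a)^s` at integer arguments
`s = m+1 ≥ 2`, where it is given by an absolutely convergent series. -/
noncomputable def hurwitzZetaNat (s : ℕ) (a : ℝ) : ℝ := ∑' n : ℕ, 1 / ((n : ℝ) + a) ^ s

/-!
Subtracting the Fourier expansions of `B_{m+1}` at `(x + 1)/2` and at `x/2` cancels the even
frequencies and doubles the odd ones, so that on `[0, 1]`
`E_m(x) = 4 m! / π^{m+1} * ∑ₙ sin((2n+1)πx - mπ/2) / (2n+1)^{m+1}`.
At `x = p/q` the sine only depends on the residue `r` of `n` mod `q`, and the class `n = dq + r`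
sums to that sine times `(2q)^{-(m+1)} ζ(m+1, (2r+1)/(2q))`.
-/

open Real Finset

lemma hasSum_hurwitzZetaNat {s : ℕ} (hs : 2 ≤ s) (a : ℝ) :
    HasSum (fun n : ℕ => 1 / ((n : ℝ) + a) ^ s) (hurwitzZetaNat s a) := by
  refine (Summable.of_norm ?_).hasSum
  refine ((Real.summable_one_div_nat_add_rpow a s).mpr (by exact_mod_cast hs)).congr fun n => ?_
  rw [norm_div, norm_one, norm_pow, Real.norm_eq_abs, Real.rpow_natCast]

theorem HasSum.eq_sum_range_of_residue_classes {M : Type*} [AddCommMonoid M] [TopologicalSpace M]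
    [ContinuousAdd M] [T3Space M] {f : ℕ → M} {a : M} (hf : HasSum f a) {q : ℕ} (hq : q ≠ 0)
    {g : ℕ → M} (hg : ∀ r < q, HasSum (fun d => f (d * q + r)) (g r)) :
    a = ∑ r ∈ range q, g r := by
  have : NeZero q := ⟨hq⟩
  let e : Fin q × ℕ ≃ ℕ := (Equiv.prodComm _ _).trans (Nat.divModEquiv q).symm
  have h := (e.hasSum_iff.mpr hf).prod_fiberwise fun r => hg r r.2
  rw [← Fin.sum_univ_eq_sum_range]
  exact h.unique (hasSum_fintype _)

theorem hasSum_one_div_nat_pow_mul_cos_sub {k : ℕ} (hk : 2 ≤ k) {x : ℝ}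
    (hx : x ∈ Set.Icc (0 : ℝ) 1) :
    HasSum (fun n : ℕ => 1 / (n : ℝ) ^ k * cos (2 * π * n * x - k * π / 2))
      (-(2 * π) ^ k / 2 / k.factorial * bernoulliFun k x) := by
  have hsign (j : ℕ) : (-1 : ℝ) ^ j * (-1) ^ (j + 1) = -1 := by
    rw [← pow_add, Odd.neg_one_pow ⟨j, by ring⟩]
  obtain ⟨j, rfl | rfl⟩ := Nat.even_or_odd' k
  · convert (hasSum_one_div_nat_pow_mul_cos (k := j) (by omega) hx).const_smul ((-1 : ℝ) ^ j)
      using 1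
    · ext n
      rw [smul_eq_mul, show 2 * π * n * x - ((2 * j : ℕ) : ℝ) * π / 2 =
        2 * π * n * x - j * π by push_cast; ring, cos_sub_nat_mul_pi]
      ring
    · change _ = _ * (_ * bernoulliFun (2 * j) x)
      linear_combination (-(2 * π) ^ (2 * j) / 2 / (2 * j).factorial * bernoulliFun (2 * j) x) *
        hsign j
  · convert (hasSum_one_div_nat_pow_mul_sin (k := j) (by omega) hx).const_smul ((-1 : ℝ) ^ j)
      using 1
    · ext n
      rw [smul_eq_mul, show 2 * π * n * x - ((2 * j + 1 : ℕ) : ℝ) * π / 2 =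
        2 * π * n * x - π / 2 - j * π by push_cast; ring, cos_sub_nat_mul_pi, cos_sub_pi_div_two]
      ring
    · change _ = _ * (_ * bernoulliFun (2 * j + 1) x)
      linear_combination (-(2 * π) ^ (2 * j + 1) / 2 / (2 * j + 1).factorial *
        bernoulliFun (2 * j + 1) x) * hsign j

lemma eulerPoly_eq_bernoulliFun (m : ℕ) (x : ℝ) :
    eulerPoly m x = 2 ^ (m + 1) / (m + 1) *
      (bernoulliFun (m + 1) ((x + 1) / 2) - bernoulliFun (m + 1) (x / 2)) := rfl

theorem hasSum_sin_odd_div_pow_eulerPoly {m : ℕ} (hm : 0 < m) {x : ℝ}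
    (hx : x ∈ Set.Icc (0 : ℝ) 1) :
    HasSum (fun n : ℕ => sin ((2 * n + 1) * π * x - m * π / 2) / (2 * n + 1) ^ (m + 1))
      (π ^ (m + 1) / (4 * m.factorial) * eulerPoly m x) := by
  have hx₁ : (x + 1) / 2 ∈ Set.Icc (0 : ℝ) 1 := ⟨by linarith [hx.1], by linarith [hx.2]⟩
  have hx₀ : x / 2 ∈ Set.Icc (0 : ℝ) 1 := ⟨by linarith [hx.1], by linarith [hx.2]⟩
  have hk : 2 ≤ m + 1 := by omega
  have H := (hasSum_one_div_nat_pow_mul_cos_sub hk hx₁).sub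
    (hasSum_one_div_nat_pow_mul_cos_sub hk hx₀)
  have hinj : Function.Injective fun j : ℕ => 2 * j + 1 := fun a b h => by simpa using h
  have heven : ∀ n ∉ Set.range fun j : ℕ => 2 * j + 1,
      1 / (n : ℝ) ^ (m + 1) * cos (2 * π * n * ((x + 1) / 2) - ↑(m + 1) * π / 2) -
        1 / (n : ℝ) ^ (m + 1) * cos (2 * π * n * (x / 2) - ↑(m + 1) * π / 2) = 0 := by
    intro n hn
    obtain ⟨t, rfl⟩ : Even n := Nat.not_odd_iff_even.mp fun ⟨j, hj⟩ => hn ⟨j, hj.symm⟩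
    rw [show 2 * π * ((t + t : ℕ) : ℝ) * ((x + 1) / 2) - ↑(m + 1) * π / 2 =
      2 * π * ((t + t : ℕ) : ℝ) * (x / 2) - ↑(m + 1) * π / 2 + t * (2 * π) by
        push_cast; ring,
      cos_add_nat_mul_two_pi, sub_self]
  convert ((hinj.hasSum_iff heven).mpr H).const_smul (-1 / 2 : ℝ) using 1
  · ext j
    have hshift : 2 * π * ((2 * j + 1 : ℕ) : ℝ) * ((x + 1) / 2) - ↑(m + 1) * π / 2 =
        2 * π * ((2 * j + 1 : ℕ) : ℝ) * (x / 2) - ↑(m + 1) * π / 2 +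
          (j * (2 * π) + π) := by
      push_cast; ring
    have hphase : 2 * π * ((2 * j + 1 : ℕ) : ℝ) * (x / 2) - ↑(m + 1) * π / 2 =
        (2 * j + 1) * π * x - m * π / 2 - π / 2 := by
      push_cast; ring
    rw [Function.comp_apply, smul_eq_mul, hshift, cos_antiperiodic.nat_odd_mul_antiperiodic,
      hphase, cos_sub_pi_div_two]
    push_cast
    ring
  · rw [smul_eq_mul, eulerPoly_eq_bernoulliFun, Nat.factorial_succ]
    push_cast
    field_simp
    ring

theorem hasSum_sin_odd_div_pow_residue_class (p : ℤ) {q : ℕ} (hq : q ≠ 0) (φ : ℝ) {s : ℕ}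
    (hs : 2 ≤ s) (r : ℕ) :
    HasSum (fun d : ℕ => sin ((2 * ((d * q + r : ℕ) : ℝ) + 1) * π * (p / q) - φ) /
        (2 * ((d * q + r : ℕ) : ℝ) + 1) ^ s)
      (sin ((2 * r + 1) * π * p / q - φ) * hurwitzZetaNat s ((2 * r + 1) / (2 * q)) /
        (2 * q) ^ s) := by
  refine (((hasSum_hurwitzZetaNat hs _).mul_left _).div_const _).congr_fun fun d => ?_
  have hq' : (q : ℝ) ≠ 0 := by exact_mod_cast hq
  have hsin : (2 * ((d * q + r : ℕ) : ℝ) + 1) * π * (p / q) - φ =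
      (2 * r + 1) * π * p / q - φ + (d * p : ℤ) * (2 * π) := by
    push_cast; field_simp; ring
  have hden : 2 * ((d * q + r : ℕ) : ℝ) + 1 = 2 * q * (d + (2 * r + 1) / (2 * q)) := by
    push_cast; field_simp; ring
  rw [hsin, sin_add_int_mul_two_pi, hden, mul_pow]
  field_simp

theorem eulerPoly_rational_arg_general (p q : ℕ) (hq : 1 ≤ q) (hpq : p ≤ q)
    (m : ℕ) (hm : 0 < m) :
    eulerPoly m ((p : ℝ) / q) =
      (4 * m.factorial / (2 * q * Real.pi) ^ (m + 1)) *
        ∑ r ∈ Finset.Icc 1 q,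
          Real.sin ((2 * r - 1) * Real.pi * p / q - m * Real.pi / 2) *
            hurwitzZetaNat (m + 1) ((2 * (r : ℝ) - 1) / (2 * q)) := by
  have hx : (p : ℝ) / q ∈ Set.Icc (0 : ℝ) 1 :=
    ⟨by positivity, div_le_one_of_le₀ (by exact_mod_cast hpq) (by positivity)⟩
  have key := (hasSum_sin_odd_div_pow_eulerPoly hm hx).eq_sum_range_of_residue_classes
    (by omega) fun r _ => hasSum_sin_odd_div_pow_residue_class p (by omega) (m * π / 2)
      (by omega : 2 ≤ m + 1) r
  have hIcc : ∑ r ∈ Icc 1 q, sin ((2 * r - 1) * π * p / q - m * π / 2) *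
        hurwitzZetaNat (m + 1) ((2 * (r : ℝ) - 1) / (2 * q)) =
      ∑ r ∈ range q, sin ((2 * r + 1) * π * p / q - m * π / 2) *
        hurwitzZetaNat (m + 1) ((2 * r + 1) / (2 * q)) := by
    rw [← Ico_add_one_right_eq_Icc, sum_Ico_eq_sum_range, add_tsub_cancel_right]
    refine sum_congr rfl fun r _ => ?_
    push_cast
    ring_nf
  simp only [Int.cast_natCast, ← sum_div] at key
  have h2q : (2 * (q : ℝ)) ^ (m + 1) ≠ 0 := by positivity
  rw [hIcc, ← div_mul_cancel₀ (∑ r ∈ range q, _) h2q, ← key]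
  field_simp
  ring

theorem eulerPoly_rational_arg (p q : ℕ) (hq : 1 ≤ q) (hp1 : 1 ≤ p) (hpq : p ≤ q)
    (m : ℕ) (hm : 0 < m) :
    eulerPoly m ((p : ℝ) / q) =
      (4 * m.factorial / (2 * q * Real.pi) ^ (m + 1)) *
        ∑ r ∈ Finset.Icc 1 q,
          Real.sin ((2 * r - 1) * Real.pi * p / q - m * Real.pi / 2) *
            hurwitzZetaNat (m + 1) ((2 * (r : ℝ) - 1) / (2 * q)) :=
  eulerPoly_rational_arg_general p q hq hpq m hm
end
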